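/- Let K ≥ 1, let p ≥ 1 be real, and let m ≥ 2 be an integer. Define F on ℝ^K by F(J)_i = J_i^m − J_i ∑_{j=1}^K J_j^{m−1} |J_j|^p, and let e_j be the j-th standard basis vector. Then F(−e_j) = 0 and F is Fréchet differentiable at −e_j, and: (1) if m is odd (m ≥ 3), the derivative of F at −e_j is a diagonal linear map with all diagonal entries negative, so the fully sparse configuration with one weight equal to −1 is linearly stable; (2) if m is even (m ≥ 2), the derivative of F at −e_j has a positive diagonal entry, so that configuration is linearly unstable. -/

import Mathlib

/-!
At a point `a • e_j` all coordinates but the `j`-th vanish, and `g x = x ^ (m - 1) * |x| ^ p`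
is flat at `0` (it is `x` times a continuous function vanishing at `0`), so the Jacobian of
`J ↦ f ∘ J - J * ∑ g ∘ J` there is diagonal, with entries `f' 0 - g a` off `j` and
`f' a - g a - a * g' a` at `j`. For `f x = x ^ m` and `a = -1` these are `(-1) ^ m` and
`p * (-1) ^ m`.
-/

open Filter Topology

theorem hasDerivAt_mul_of_tendsto {h : ℝ → ℝ} {c : ℝ} (hh : Tendsto h (𝓝 0) (𝓝 c)) :
    HasDerivAt (fun x => x * h x) c 0 := by
  rw [hasDerivAt_iff_isLittleO]
  simpa [mul_sub] using (Asymptotics.isBigO_refl (fun x : ℝ => x) (𝓝 0)).mul_isLittleO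
    ((Asymptotics.isLittleO_one_iff ℝ).2 (tendsto_sub_nhds_zero_iff.2 hh))

theorem hasDerivAt_pow_mul_abs_rpow_zero {n : ℕ} (hn : n ≠ 0) {p : ℝ} (hp : 0 < p) :
    HasDerivAt (fun x : ℝ => x ^ n * |x| ^ p) 0 0 := by
  obtain ⟨k, rfl⟩ : ∃ k, n = k + 1 := ⟨n - 1, by omega⟩
  have hcont : Continuous fun x : ℝ => x ^ k * |x| ^ p :=
    (continuous_pow k).mul (continuous_abs.rpow_const fun _ => Or.inr hp.le)
  have hlim := hcont.tendsto 0
  rw [abs_zero, Real.zero_rpow hp.ne', mul_zero] at hlim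
  convert hasDerivAt_mul_of_tendsto hlim using 2 with x
  ring

theorem hasDerivAt_pow_mul_abs_rpow_neg_one (n : ℕ) (p : ℝ) :
    HasDerivAt (fun x : ℝ => x ^ n * |x| ^ p) (-(n + p) * (-1) ^ n) (-1) := by
  have habs : HasDerivAt (fun x : ℝ => |x| ^ p) (-p) (-1) := by
    convert (hasDerivAt_abs_neg (by norm_num : (-1 : ℝ) < 0)).rpow_const (p := p)
      (Or.inl (by norm_num)) using 1
    simp
  refine ((hasDerivAt_pow n (-1 : ℝ)).mul habs).congr_deriv ?_
  rcases n with _ | n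
  · simp
  · simp [pow_succ]
    ring

section HebbianField

variable {ι : Type*} [Fintype ι]

def hebbianField (f g : ℝ → ℝ) (J : ι → ℝ) : ι → ℝ :=
  fun i => f (J i) - J i * ∑ k, g (J k)

theorem hasFDerivAt_hebbianField {f g : ℝ → ℝ} {f' g' : ι → ℝ} {J : ι → ℝ}
    (hf : ∀ i, HasDerivAt f (f' i) (J i)) (hg : ∀ k, HasDerivAt g (g' k) (J k)) :
    HasFDerivAt (𝕜 := ℝ) (hebbianField f g)
      (.pi fun i => (f' i - ∑ k, g (J k)) • ContinuousLinearMap.proj i -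
        J i • ∑ k, g' k • ContinuousLinearMap.proj k) J := by
  refine hasFDerivAt_pi.2 fun i => ?_
  have hproj (k : ι) :
      HasFDerivAt (𝕜 := ℝ) (fun J : ι → ℝ => J k) (ContinuousLinearMap.proj k) J :=
    hasFDerivAt_apply k J
  have hsum : HasFDerivAt (fun J : ι → ℝ => ∑ k, g (J k))
      (∑ k, g' k • ContinuousLinearMap.proj k) J :=
    .fun_sum fun k _ => (hg k).comp_hasFDerivAt J (hproj k)
  refine (((hf i).comp_hasFDerivAt J (hproj i)).sub ((hproj i).mul hsum)).congr_fderiv ?_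
  module

variable [DecidableEq ι]

theorem hebbianField_single {f g : ℝ → ℝ} (hf : f 0 = 0) (hg : g 0 = 0) (j : ι) (a : ℝ) :
    hebbianField f g (Pi.single j a) = Pi.single j (f a - a * g a) := by
  ext i
  rcases eq_or_ne i j with rfl | hij
  · simp [hebbianField, Pi.apply_single (fun _ => g) (fun _ => hg)]
  · simp [hebbianField, hij, hf]

theorem hasFDerivAt_hebbianField_single {f g : ℝ → ℝ} {f₀' fa' ga' a : ℝ} (j : ι)
    (hf₀ : HasDerivAt f f₀' 0) (hfa : HasDerivAt f fa' a) (hg₀ : HasDerivAt g 0 0)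
    (hga : HasDerivAt g ga' a) (hg : g 0 = 0) :
    HasFDerivAt (𝕜 := ℝ) (hebbianField f g)
      (.pi fun i => Function.update (fun _ => f₀' - g a) j (fa' - g a - a * ga') i •
        ContinuousLinearMap.proj i)
      (Pi.single j a) := by
  have key := hasFDerivAt_hebbianField (f := f) (g := g) (J := Pi.single j a)
    (f' := Function.update (fun _ => f₀') j fa') (g' := Function.update (fun _ => 0) j ga')
    (fun i => by rcases eq_or_ne i j with rfl | hij <;> simp [*])
    (fun i => by rcases eq_or_ne i j with rfl | hij <;> simp [*])
  convert key using 1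
  ext v i
  rcases eq_or_ne i j with rfl | hij
  · simp [Pi.apply_single (fun _ => g) (fun _ => hg), Function.update_apply]
    ring
  · simp [Pi.apply_single (fun _ => g) (fun _ => hg), Function.update_apply, hij]

end HebbianField

theorem stmt18_general (K : ℕ) (p : ℝ) (hp : 1 ≤ p)
    (m : ℕ) (hm : 2 ≤ m)
    (F : (Fin K → ℝ) → (Fin K → ℝ))
    (hF : F = fun J i => J i ^ m - J i * ∑ j, J j ^ (m - 1) * |J j| ^ p)
    (j : Fin K) :
    F (-Pi.single j 1) = 0 ∧
    ∃ d : Fin K → ℝ,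
      HasFDerivAt (𝕜 := ℝ) F
        (ContinuousLinearMap.pi fun i => d i • ContinuousLinearMap.proj i)
        (-Pi.single j 1) ∧
      (Odd m → ∀ i, d i < 0) ∧
      (Even m → ∃ i, 0 < d i) := by
  obtain ⟨n, rfl⟩ : ∃ n, m = n + 1 := ⟨m - 1, by omega⟩
  have hn : n ≠ 0 := by omega
  have hp₀ : 0 < p := by linarith
  have hg₀ : (0 : ℝ) ^ n * |0| ^ p = 0 := by simp [hn]
  obtain rfl : F = hebbianField (· ^ (n + 1)) (fun x => x ^ n * |x| ^ p) := by
    rw [hF, Nat.add_sub_cancel]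
    rfl
  rw [← Pi.single_neg]
  refine ⟨?_, _, hasFDerivAt_hebbianField_single j (hasDerivAt_pow _ _) (hasDerivAt_pow _ _)
    (hasDerivAt_pow_mul_abs_rpow_zero hn hp₀) (hasDerivAt_pow_mul_abs_rpow_neg_one n p) hg₀,
    fun hodd i => ?_, fun heven => ⟨j, ?_⟩⟩
  · rw [hebbianField_single (by simp) hg₀]
    simp [pow_succ]
  · have hn_even : Even n := by simpa [Nat.odd_add_one] using hodd
    rcases eq_or_ne i j with rfl | hij
    · simp [hn_even.neg_one_pow, hn, hp₀]
    · simp [hn_even.neg_one_pow, hn, hij]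
  · have hn_odd : Odd n := by simpa [Nat.even_add_one] using heven
    simp [hn_odd.neg_one_pow, hn, hp₀]

/-- Diagonal input correlations with `m = a + c ≥ 2`: the fully sparse configuration
`-e_j` is an equilibrium of `F` with a diagonal Fréchet derivative; it is linearly
stable (all diagonal entries negative) when `m` is odd, and linearly unstable
(a positive diagonal entry) when `m` is even. -/
theorem stmt18 (K : ℕ) (hK : 1 ≤ K) (p : ℝ) (hp : 1 ≤ p)
    (m : ℕ) (hm : 2 ≤ m)
    (F : (Fin K → ℝ) → (Fin K → ℝ))
    (hF : F = fun J i => J i ^ m - J i * ∑ j, J j ^ (m - 1) * |J j| ^ p)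
    (j : Fin K) :
    F (-Pi.single j 1) = 0 ∧
    ∃ d : Fin K → ℝ,
      HasFDerivAt (𝕜 := ℝ) F
        (ContinuousLinearMap.pi fun i => d i • ContinuousLinearMap.proj i)
        (-Pi.single j 1) ∧
      (Odd m → ∀ i, d i < 0) ∧
      (Even m → ∃ i, 0 < d i) :=
  stmt18_general K p hp m hm F hF j
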